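/- Let G = (V,E) be a finite simple graph and let A ∈ 𝒜_G be a generalized adjacency matrix of G. Then Υ(A,·) is the dual gauge of the Hoffman bound H(A,·), i.e. for every w ∈ ℝ₊^V, Υ(A,w) = sup{⟨w,x⟩ : x ∈ ℝ₊^V, H(A,x) ≤ 1}. -/

import Mathlib

open scoped BigOperators Pointwise

variable {V : Type*} [Fintype V] [DecidableEq V]

/-- Inner product on `ℝ^V`. -/
def ip (w z : V → ℝ) : ℝ := ∑ i, w i * z i

/-- `κ` is a positive definite monotone gauge on the nonnegative orthant of `ℝ^V`. -/
def IsPDMGauge (κ : (V → ℝ) → ℝ) : Prop :=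
  κ 0 = 0 ∧
  (∀ w : V → ℝ, 0 ≤ w → 0 ≤ κ w) ∧
  (∀ (c : ℝ) (w : V → ℝ), 0 < c → 0 ≤ w → κ (c • w) = c * κ w) ∧
  (∀ w z : V → ℝ, 0 ≤ w → 0 ≤ z → κ (w + z) ≤ κ w + κ z) ∧
  (∀ w : V → ℝ, 0 ≤ w → w ≠ 0 → 0 < κ w) ∧
  (∀ w z : V → ℝ, 0 ≤ w → w ≤ z → κ w ≤ κ z)

/-- The dual gauge `κ∘(z) = sup{⟨w,z⟩ : w ≥ 0, κ(w) ≤ 1}`. -/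
noncomputable def dualGauge (κ : (V → ℝ) → ℝ) (z : V → ℝ) : ℝ :=
  sSup {r : ℝ | ∃ w : V → ℝ, 0 ≤ w ∧ κ w ≤ 1 ∧ r = ip w z}

/-- The antiblocker of a subset of the nonnegative orthant. -/
def abl (X : Set (V → ℝ)) : Set (V → ℝ) := {y | 0 ≤ y ∧ ∀ x ∈ X, ip x y ≤ 1}

/-- A convex corner: compact, convex, nonempty interior, subset of the nonnegative
orthant, and lower-comprehensive. -/
def IsConvexCorner (C : Set (V → ℝ)) : Prop :=
  IsCompact C ∧ Convex ℝ C ∧ (interior C).Nonempty ∧ (∀ x ∈ C, 0 ≤ x) ∧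
  ∀ x y : V → ℝ, 0 ≤ x → x ≤ y → y ∈ C → x ∈ C

/-- Minkowski functional of a set. -/
noncomputable def minkowski (C : Set (V → ℝ)) (x : V → ℝ) : ℝ :=
  sInf {μ : ℝ | 0 ≤ μ ∧ x ∈ μ • C}

/-- Support function of a set. -/
noncomputable def suppFn (C : Set (V → ℝ)) (y : V → ℝ) : ℝ :=
  sSup {r : ℝ | ∃ x ∈ C, r = ip x y}

/-- A stable (independent) set of vertices. -/
def IsStableSet (G : SimpleGraph V) (S : Finset V) : Prop :=
  ∀ i ∈ S, ∀ j ∈ S, ¬ G.Adj i j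

/-- Weighted stability number `α(G,w)`. -/
noncomputable def alphaW (G : SimpleGraph V) (w : V → ℝ) : ℝ :=
  sSup {r : ℝ | ∃ S : Finset V, IsStableSet G S ∧ r = ∑ i ∈ S, w i}

/-- Stability number `α(G)`. -/
noncomputable def stabilityNumber (G : SimpleGraph V) : ℕ :=
  sSup {n : ℕ | ∃ S : Finset V, IsStableSet G S ∧ S.card = n}

/-- Weighted fractional chromatic number `χ_f(G,w)`. -/
noncomputable def chiF (G : SimpleGraph V) (w : V → ℝ) : ℝ :=
  sInf {r : ℝ | ∃ y : Finset V → ℝ,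
    (∀ S, 0 ≤ y S) ∧ (∀ S, ¬ IsStableSet G S → y S = 0) ∧
    (∀ i, w i ≤ ∑ S : Finset V, (if i ∈ S then y S else 0)) ∧
    r = ∑ S : Finset V, y S}

/-- The stable set polytope `STAB(G)`. -/
def STABset (G : SimpleGraph V) : Set (V → ℝ) :=
  convexHull ℝ {x : V → ℝ | ∃ S : Finset V, IsStableSet G S ∧
    x = fun i => if i ∈ S then (1 : ℝ) else 0}

/-- The fractional stable set polytope `QSTAB(G)`. -/
def QSTABset (H : SimpleGraph V) : Set (V → ℝ) :=
  {x | 0 ≤ x ∧ ∀ K : Finset V, H.IsClique (↑K : Set V) → ∑ i ∈ K, x i ≤ 1}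

/-- The set of (real) eigenvalues of a matrix. -/
def spectrumSet (M : Matrix V V ℝ) : Set ℝ :=
  {t | ∃ x : V → ℝ, x ≠ 0 ∧ M.mulVec x = t • x}

/-- Largest eigenvalue. -/
noncomputable def lambdaMax (M : Matrix V V ℝ) : ℝ := sSup (spectrumSet M)

/-- Smallest eigenvalue. -/
noncomputable def lambdaMin (M : Matrix V V ℝ) : ℝ := sInf (spectrumSet M)

/-- Positive semidefinite square root (zero on non-PSD matrices). -/
noncomputable def psdSqrt (M : Matrix V V ℝ) : Matrix V V ℝ :=
  letI := Classical.dec M.PosSemidef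
  if h : M.PosSemidef then
    h.1.eigenvectorUnitary.1 * Matrix.diagonal ((RCLike.ofReal : ℝ → ℝ) ∘ Real.sqrt ∘ h.1.eigenvalues) *
      (star h.1.eigenvectorUnitary : Matrix V V ℝ) else 0

/-- `Â = A / (-λ_min(A))` for nonzero `A`, and `0̂ = 0`. -/
noncomputable def hatM (A : Matrix V V ℝ) : Matrix V V ℝ :=
  if A = 0 then 0 else (-(lambdaMin A))⁻¹ • A

/-- `A` is a generalized adjacency matrix of `G`: symmetric, with `A i j = 0`
whenever `i` and `j` are non-adjacent (in particular on the diagonal). -/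
def IsGenAdj (G : SimpleGraph V) (A : Matrix V V ℝ) : Prop :=
  A.IsSymm ∧ ∀ i j, ¬ G.Adj i j → A i j = 0

/-- Weighted Hoffman bound `H(A,w) = λ_max(W^{1/2}(I+Â)W^{1/2})`, `W = Diag w`. -/
noncomputable def hoffman (A : Matrix V V ℝ) (w : V → ℝ) : ℝ :=
  lambdaMax (psdSqrt (Matrix.diagonal w) * (1 + hatM A) * psdSqrt (Matrix.diagonal w))

/-- The feasible region `𝒰_A` of the SDP defining `Υ(A,·)`. -/
def Uset (A : Matrix V V ℝ) : Set (V → ℝ) :=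
  {x | 0 ≤ x ∧ ((1 : Matrix V V ℝ) -
    psdSqrt (1 + hatM A) * Matrix.diagonal x * psdSqrt (1 + hatM A)).PosSemidef}

/-- `Υ(A,w) = max{⟨w,x⟩ : x ≥ 0, (I+Â)^{1/2} Diag(x) (I+Â)^{1/2} ⪯ I}`. -/
noncomputable def upsilon (A : Matrix V V ℝ) (w : V → ℝ) : ℝ :=
  sSup {r : ℝ | ∃ x ∈ Uset A, r = ip w x}

/-- The diagonal of a matrix, as a vector. -/
def diagVec (M : Matrix V V ℝ) : V → ℝ := fun i => M i i

/-- The convex corner `ℋ_A`. -/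
def Hset (A : Matrix V V ℝ) : Set (V → ℝ) :=
  {x | 0 ≤ x ∧ ∃ Y : Matrix V V ℝ, Y.PosSemidef ∧ Y.trace ≤ 1 ∧
    ∀ i, x i ≤ diagVec (psdSqrt (1 + hatM A) * Y * psdSqrt (1 + hatM A)) i}

/-- Objective function of Luz's convex quadratic program:
`2⟨w,x⟩ − ⟨x, W^{1/2}(I+Â)W^{1/2} x⟩`. -/
noncomputable def luzObj (A : Matrix V V ℝ) (w x : V → ℝ) : ℝ :=
  2 * ip w x - ∑ i, x i *
    ((psdSqrt (Matrix.diagonal w) * (1 + hatM A) * psdSqrt (Matrix.diagonal w)).mulVec x) i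

/-- Luz's bound `ℓ(A,w)` as a real number (supremum of the CQP objective). -/
noncomputable def luz (A : Matrix V V ℝ) (w : V → ℝ) : ℝ :=
  sSup {r : ℝ | ∃ x : V → ℝ, 0 ≤ x ∧ r = luzObj A w x}

/-- Luz's bound `ℓ(A,w)` with values in `ℝ ∪ {±∞}`. -/
noncomputable def luzE (A : Matrix V V ℝ) (w : V → ℝ) : EReal :=
  sSup {r : EReal | ∃ x : V → ℝ, 0 ≤ x ∧ r = ((luzObj A w x : ℝ) : EReal)}

/-- The theta body `TH(G)`. -/
def THbody (G : SimpleGraph V) : Set (V → ℝ) :=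
  {x | 0 ≤ x ∧ ∃ X : Matrix V V ℝ, X.PosSemidef ∧ (∀ i, X i i = x i) ∧
    (∀ i j, G.Adj i j → X i j = 0) ∧
    (Matrix.fromBlocks (1 : Matrix Unit Unit ℝ) (Matrix.of fun _ j => x j)
      (Matrix.of fun i _ => x i) X).PosSemidef}

/-- Weighted Lovász theta number `θ(G,w)`. -/
noncomputable def thetaW (G : SimpleGraph V) (w : V → ℝ) : ℝ :=
  sSup {r : ℝ | ∃ x ∈ THbody G, r = ip w x}


lemma diag_ofReal {M : Matrix V V ℝ} (hM : M.IsHermitian) :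
    (RCLike.ofReal ∘ hM.eigenvalues : V → ℝ) = hM.eigenvalues := by
  rw [RCLike.ofReal_real_eq_id]; rfl

lemma spectral_real {M : Matrix V V ℝ} (hM : M.IsHermitian) :
    M = (hM.eigenvectorUnitary : Matrix V V ℝ) * Matrix.diagonal hM.eigenvalues *
      star (hM.eigenvectorUnitary : Matrix V V ℝ) := by
  conv_lhs => rw [hM.spectral_theorem]
  rw [diag_ofReal]
  rfl

lemma range_subset_spec {M : Matrix V V ℝ} (hM : M.IsHermitian) :
    Set.range hM.eigenvalues ⊆ spectrumSet M := by
  rintro t ⟨i, rfl⟩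
  refine ⟨⇑(hM.eigenvectorBasis i), ?_, hM.mulVec_eigenvectorBasis i⟩
  intro h
  exact hM.eigenvectorBasis.orthonormal.ne_zero i (by ext j; exact congrFun h j)

lemma spec_subset_range {M : Matrix V V ℝ} (hM : M.IsHermitian) :
    spectrumSet M ⊆ Set.range hM.eigenvalues := by
  rintro t ⟨x, hx, hMx⟩
  have hdet : (M - t • (1 : Matrix V V ℝ)).det = 0 := by
    rw [← Matrix.exists_mulVec_eq_zero_iff]
    refine ⟨x, hx, ?_⟩
    rw [Matrix.sub_mulVec, Matrix.smul_mulVec, Matrix.one_mulVec, hMx, sub_self]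
  set U := (hM.eigenvectorUnitary : Matrix V V ℝ) with hU
  have hUU : U * star U = 1 := (Matrix.mem_unitaryGroup_iff).mp hM.eigenvectorUnitary.2
  have hfac : M - t • (1 : Matrix V V ℝ) =
      U * (Matrix.diagonal (fun i => hM.eigenvalues i - t)) * star U := by
    have : Matrix.diagonal (fun i => hM.eigenvalues i - t) =
        Matrix.diagonal hM.eigenvalues - t • 1 := by
      rw [Matrix.smul_one_eq_diagonal, ← Matrix.diagonal_sub]
    rw [this, Matrix.mul_sub, Matrix.sub_mul, ← spectral_real hM]
    congr 1
    rw [Matrix.mul_smul, Matrix.mul_one, Matrix.smul_mul, hUU]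
  have hUU' : star U * U = 1 := (Matrix.mem_unitaryGroup_iff').mp hM.eigenvectorUnitary.2
  rw [hfac, Matrix.det_mul, Matrix.det_mul, mul_comm, ← mul_assoc, ← Matrix.det_mul, hUU',
    Matrix.det_one, one_mul, Matrix.det_diagonal] at hdet
  obtain ⟨i, -, hi⟩ := Finset.prod_eq_zero_iff.mp hdet
  exact ⟨i, by linarith [sub_eq_zero.mp hi]⟩

lemma bddAbove_spec {M : Matrix V V ℝ} (hM : M.IsHermitian) : BddAbove (spectrumSet M) :=
  ((Set.finite_range hM.eigenvalues).subset (spec_subset_range hM)).bddAbove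

lemma bddBelow_spec {M : Matrix V V ℝ} (hM : M.IsHermitian) : BddBelow (spectrumSet M) :=
  ((Set.finite_range hM.eigenvalues).subset (spec_subset_range hM)).bddBelow

lemma psd_spec_nonneg {M : Matrix V V ℝ} (hM : M.PosSemidef) :
    ∀ t ∈ spectrumSet M, 0 ≤ t := by
  rintro t ⟨x, hx, hMx⟩
  have h0 := hM.dotProduct_mulVec_nonneg x
  rw [hMx, star_trivial, dotProduct_smul] at h0
  have hxx : 0 < dotProduct x x := by
    have h1 : 0 ≤ dotProduct x x := Finset.sum_nonneg fun i _ => mul_self_nonneg _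
    rcases h1.lt_or_eq with h | h
    · exact h
    · refine absurd (funext fun i => ?_) hx
      have := (Finset.sum_eq_zero_iff_of_nonneg
        (fun i _ => mul_self_nonneg (x i))).mp h.symm i (Finset.mem_univ i)
      have : x i * x i = 0 := this
      exact mul_self_eq_zero.mp this
  rw [smul_eq_mul] at h0
  exact nonneg_of_mul_nonneg_left h0 hxx

lemma psd_of_spec_nonneg {M : Matrix V V ℝ} (hM : M.IsHermitian)
    (h : ∀ t ∈ spectrumSet M, 0 ≤ t) : M.PosSemidef := by
  have hev : ∀ i, 0 ≤ hM.eigenvalues i := fun i =>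
    h _ (range_subset_spec hM ⟨i, rfl⟩)
  have := (Matrix.posSemidef_diagonal_iff.mpr hev).mul_mul_conjTranspose_same
    (hM.eigenvectorUnitary : Matrix V V ℝ)
  rwa [← Matrix.star_eq_conjTranspose, ← spectral_real hM] at this

lemma mem_spec_one_sub {M : Matrix V V ℝ} {t : ℝ} (h : t ∈ spectrumSet M) :
    1 - t ∈ spectrumSet (1 - M) := by
  obtain ⟨x, hx, hMx⟩ := h
  refine ⟨x, hx, ?_⟩
  rw [Matrix.sub_mulVec, Matrix.one_mulVec, hMx, sub_smul, one_smul]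

lemma psd_one_sub_iff {M : Matrix V V ℝ} (hM : M.IsHermitian) :
    ((1 : Matrix V V ℝ) - M).PosSemidef ↔ ∀ t ∈ spectrumSet M, t ≤ 1 := by
  constructor
  · intro h t ht
    have := psd_spec_nonneg h _ (mem_spec_one_sub ht)
    linarith
  · intro h
    refine psd_of_spec_nonneg (Matrix.IsHermitian.sub Matrix.isHermitian_one hM) ?_
    intro s hs
    have : 1 - s ∈ spectrumSet M := by
      have := mem_spec_one_sub hs
      rwa [sub_sub_cancel] at this
    linarith [h _ this]

lemma lambdaMax_le_one_iff {M : Matrix V V ℝ} (hM : M.IsHermitian) :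
    lambdaMax M ≤ 1 ↔ ∀ t ∈ spectrumSet M, t ≤ 1 := by
  constructor
  · intro h t ht
    exact le_trans (le_csSup (bddAbove_spec hM) ht) h
  · intro h
    exact Real.sSup_le h one_pos.le

lemma spec_transfer {C : Matrix V V ℝ} {t : ℝ} (ht : 0 < t)
    (h : t ∈ spectrumSet (C * C.conjTranspose)) : t ∈ spectrumSet (C.conjTranspose * C) := by
  obtain ⟨v, hv, hCv⟩ := h
  refine ⟨C.conjTranspose.mulVec v, ?_, ?_⟩
  · intro h0
    have : (C * C.conjTranspose).mulVec v = 0 := by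
      rw [← Matrix.mulVec_mulVec, h0, Matrix.mulVec_zero]
    rw [hCv] at this
    exact hv (by simpa [ht.ne'] using smul_eq_zero.mp this)
  · have h1 : C.mulVec (C.conjTranspose.mulVec v) = t • v := by
      rw [Matrix.mulVec_mulVec, hCv]
    rw [← Matrix.mulVec_mulVec, h1, Matrix.mulVec_smul]

set_option linter.unusedSectionVars false

lemma psdSqrt_posSemidef {M : Matrix V V ℝ} (hM : M.PosSemidef) :
    (psdSqrt M).PosSemidef := by
  unfold psdSqrt
  rw [dif_pos hM]
  have := (Matrix.posSemidef_diagonal_iff.mpr (fun i => by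
    simp [Real.sqrt_nonneg] : ∀ i, 0 ≤ ((RCLike.ofReal : ℝ → ℝ) ∘ Real.sqrt ∘ hM.1.eigenvalues) i)).mul_mul_conjTranspose_same
    (hM.1.eigenvectorUnitary : Matrix V V ℝ)
  rwa [← Matrix.star_eq_conjTranspose] at this

lemma psdSqrt_mul_self {M : Matrix V V ℝ} (hM : M.PosSemidef) :
    psdSqrt M * psdSqrt M = M := by
  unfold psdSqrt
  rw [dif_pos hM]
  have hUU' : star (hM.1.eigenvectorUnitary : Matrix V V ℝ) *
      (hM.1.eigenvectorUnitary : Matrix V V ℝ) = 1 :=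
    (Matrix.mem_unitaryGroup_iff').mp hM.1.eigenvectorUnitary.2
  set U := (hM.1.eigenvectorUnitary : Matrix V V ℝ)
  set D := Matrix.diagonal ((RCLike.ofReal : ℝ → ℝ) ∘ Real.sqrt ∘ hM.1.eigenvalues)
  have hDD : D * D = Matrix.diagonal hM.1.eigenvalues := by
    rw [Matrix.diagonal_mul_diagonal]
    congr 1
    funext i
    simp [Real.mul_self_sqrt (hM.eigenvalues_nonneg i)]
  calc U * D * star U * (U * D * star U) = U * (D * (star U * U) * D) * star U := by
        simp only [Matrix.mul_assoc]
    _ = M := by rw [hUU', Matrix.mul_one, hDD, ← spectral_real hM.1]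

lemma key_iff {B : Matrix V V ℝ} (hB : B.PosSemidef) {x : V → ℝ} (hx : 0 ≤ x) :
    lambdaMax (psdSqrt (Matrix.diagonal x) * B * psdSqrt (Matrix.diagonal x)) ≤ 1 ↔
    ((1 : Matrix V V ℝ) - psdSqrt B * Matrix.diagonal x * psdSqrt B).PosSemidef := by
  have hDx : (Matrix.diagonal x).PosSemidef :=
    Matrix.posSemidef_diagonal_iff.mpr fun i => hx i
  set R := psdSqrt (Matrix.diagonal x) with hRdef
  set S := psdSqrt B with hSdef
  have hR := psdSqrt_posSemidef hDx
  have hS := psdSqrt_posSemidef hB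
  set C := R * S with hC
  have hCt : C.conjTranspose = S * R := by
    rw [hC, Matrix.conjTranspose_mul, hR.1, hS.1]
  have hM1 : R * B * R = C * C.conjTranspose := by
    rw [hCt, hC, ← psdSqrt_mul_self hB, ← hSdef]
    simp only [Matrix.mul_assoc]
  have hM2 : S * Matrix.diagonal x * S = C.conjTranspose * C := by
    rw [hCt, hC, ← psdSqrt_mul_self hDx, ← hRdef]
    simp only [Matrix.mul_assoc]
  have hPSD1 := Matrix.posSemidef_self_mul_conjTranspose C
  have hPSD2 := Matrix.posSemidef_conjTranspose_mul_self C
  rw [hM1, hM2, lambdaMax_le_one_iff hPSD1.1, psd_one_sub_iff hPSD2.1]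
  constructor
  · intro h t ht
    rcases lt_or_ge 0 t with htp | htn
    · refine h t ?_
      have := spec_transfer (C := C.conjTranspose) htp
      rw [Matrix.conjTranspose_conjTranspose] at this
      exact this ht
    · linarith
  · intro h t ht
    rcases lt_or_ge 0 t with htp | htn
    · exact h t (spec_transfer htp ht)
    · linarith

lemma one_add_hatM_posSemidef {G : SimpleGraph V} {A : Matrix V V ℝ}
    (hA : IsGenAdj G A) : ((1 : Matrix V V ℝ) + hatM A).PosSemidef := by
  by_cases h0 : A = 0
  · rw [hatM, if_pos h0, add_zero]
    exact Matrix.PosSemidef.one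
  · rw [hatM, if_neg h0]
    have herm : A.IsHermitian := by
      rw [Matrix.IsHermitian, Matrix.conjTranspose_eq_transpose_of_trivial]
      exact hA.1
    have hUU' : star (herm.eigenvectorUnitary : Matrix V V ℝ) *
        (herm.eigenvectorUnitary : Matrix V V ℝ) = 1 :=
      (Matrix.mem_unitaryGroup_iff').mp herm.eigenvectorUnitary.2
    have htr : ∑ i, herm.eigenvalues i = 0 := by
      have h1 : A.trace = 0 := by
        rw [Matrix.trace]
        exact Finset.sum_eq_zero fun i _ => hA.2 i i (G.irrefl)
      have h2 : A.trace = ∑ i, herm.eigenvalues i := by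
        conv_lhs => rw [spectral_real herm]
        rw [Matrix.trace_mul_cycle, hUU', Matrix.one_mul,
          Matrix.trace_diagonal]
      rw [← h2, h1]
    have hne : ∃ i, herm.eigenvalues i < 0 := by
      by_contra hcon
      push_neg at hcon
      have hall : ∀ i, herm.eigenvalues i = 0 := fun i =>
        (Finset.sum_eq_zero_iff_of_nonneg (fun i _ => hcon i)).mp htr i (Finset.mem_univ i)
      apply h0
      rw [spectral_real herm]
      have hd : Matrix.diagonal herm.eigenvalues = 0 := by
        rw [show herm.eigenvalues = fun _ => (0 : ℝ) from funext hall]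
        exact Matrix.diagonal_zero
      rw [hd, Matrix.mul_zero, Matrix.zero_mul]
    obtain ⟨i, hi⟩ := hne
    have hmin : lambdaMin A ≤ herm.eigenvalues i :=
      csInf_le (bddBelow_spec herm) (range_subset_spec herm ⟨i, rfl⟩)
    have hminneg : lambdaMin A < 0 := lt_of_le_of_lt hmin hi
    set c := (-(lambdaMin A))⁻¹ with hc
    have hcpos : 0 < c := inv_pos.mpr (by linarith)
    have hherm : ((1 : Matrix V V ℝ) + c • A).IsHermitian := by
      rw [Matrix.IsHermitian, Matrix.conjTranspose_add, Matrix.conjTranspose_smul,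
        Matrix.conjTranspose_one, star_trivial, herm]
    refine psd_of_spec_nonneg hherm ?_
    rintro t ⟨v, hv, hvt⟩
    rw [Matrix.add_mulVec, Matrix.one_mulVec, Matrix.smul_mulVec] at hvt
    have hstep : c • A.mulVec v = (t - 1) • v := by
      have : v + c • A.mulVec v = t • v := hvt
      rw [sub_smul, one_smul, ← this]
      abel
    have hAv : A.mulVec v = (c⁻¹ * (t - 1)) • v := by
      calc A.mulVec v = c⁻¹ • (c • A.mulVec v) := by
            rw [smul_smul, inv_mul_cancel₀ hcpos.ne', one_smul]
        _ = c⁻¹ • ((t - 1) • v) := by rw [hstep]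
        _ = (c⁻¹ * (t - 1)) • v := smul_smul _ _ _
    have hsle : lambdaMin A ≤ c⁻¹ * (t - 1) :=
      csInf_le (bddBelow_spec herm) ⟨v, hv, hAv⟩
    have hcinv : c⁻¹ = -(lambdaMin A) := by rw [hc, inv_inv]
    rw [hcinv] at hsle
    nlinarith [hsle, hminneg]


/-- `Υ(A,·)` is the dual gauge of the Hoffman bound `H(A,·)`. -/
theorem upsilon_eq_dual_hoffman (G : SimpleGraph V) (A : Matrix V V ℝ)
    (hA : IsGenAdj G A) (w : V → ℝ) (hw : 0 ≤ w) :
    upsilon A w = dualGauge (hoffman A) w := by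
  have hB := one_add_hatM_posSemidef hA
  unfold upsilon dualGauge
  congr 1
  ext r
  constructor
  · rintro ⟨x, ⟨hx0, hpsd⟩, rfl⟩
    exact ⟨x, hx0, (key_iff hB hx0).mpr hpsd, by
      simp only [ip]; exact Finset.sum_congr rfl fun i _ => mul_comm _ _⟩
  · rintro ⟨x, hx0, hh, rfl⟩
    exact ⟨x, ⟨hx0, (key_iff hB hx0).mp hh⟩, by
      simp only [ip]; exact Finset.sum_congr rfl fun i _ => mul_comm _ _⟩
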